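/- Under Assumption A(ρ) with 1 < ρ ≤ 2 and X_0 = 0 almost surely, assume moreover E[ξ_0⁴] < ∞ and E[ξ_0³] = 0, let K satisfy Assumption (K) or (K̃) as well as ker(ρ), let (b_n)_{n≥1} be positive reals with b_n → 0 and n·b_n → ∞, and fix u ∈ (0,1), s ∈ {1,…,T}. Then there exists a constant C > 0 such that for all n large enough, Var(J_n) ≤ C · (A_n/(n·b_n) + b_n^ρ), where A_n = 1 if K satisfies (K̃) and A_n = log n if K satisfies (K). -/

import Mathlib

open MeasureTheory ProbabilityTheory Filter Set
open scoped ProbabilityTheory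

noncomputable section

/-- The largest integer strictly smaller than a positive real `ρ`. -/
def lint (ρ : ℝ) : ℕ := ⌈ρ⌉₊ - 1

/-- A function is of class `C^ρ` on `[0,1]`: it is `lint ρ` times continuously
differentiable there and its `lint ρ`-th derivative is `(ρ - lint ρ)`-Hölder. -/
def CHolder (ρ : ℝ) (f : ℝ → ℝ) : Prop :=
  ContDiffOn ℝ (lint ρ) f (Set.Icc 0 1) ∧
  ∃ C : ℝ, 0 ≤ C ∧ ∀ u ∈ Set.Icc (0:ℝ) 1, ∀ v ∈ Set.Icc (0:ℝ) 1,
    |iteratedDerivWithin (lint ρ) f (Set.Icc 0 1) u -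
      iteratedDerivWithin (lint ρ) f (Set.Icc 0 1) v| ≤ C * |u - v| ^ (ρ - (lint ρ : ℝ))

/-- Assumption (K): a Borel, bounded, even kernel with unit integral whose tails
decay faster than some exponential. -/
def AssumpK (K : ℝ → ℝ) : Prop :=
  Measurable K ∧ (∃ M : ℝ, ∀ x, |K x| ≤ M) ∧ (∀ x, K (-x) = K x) ∧
  (∫ t : ℝ, K t) = 1 ∧
  ∃ β : ℝ, 0 < β ∧
    Tendsto (fun t => Real.exp (β * |t|) * K t) (cocompact ℝ) (nhds 0)

/-- Assumption (K̃): a Borel, bounded, even kernel with unit integral and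
compact support. -/
def AssumpKt (K : ℝ → ℝ) : Prop :=
  Measurable K ∧ (∃ M : ℝ, ∀ x, |K x| ≤ M) ∧ (∀ x, K (-x) = K x) ∧
  (∫ t : ℝ, K t) = 1 ∧
  ∃ B : ℝ, 0 < B ∧ ∀ t : ℝ, B < |t| → K t = 0

/-- Assumption ker(r): moment integrability, vanishing moments up to `lint r - 1`,
boundedness and Lipschitz continuity. -/
def AssumpKer (r : ℝ) (K : ℝ → ℝ) : Prop :=
  Integrable (fun x => (|x| ^ r + 1) * |K x|) ∧
  (∀ p : ℕ, 1 ≤ p → p ≤ lint r - 1 → (∫ x : ℝ, x ^ p * K x) = 0) ∧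
  (∃ M : ℝ, ∀ x, |K x| ≤ M) ∧ (∃ L : NNReal, LipschitzWith L K)

/-!
Up to a null set, `Jₙ = (n bₙ)^{-1/2} ∑ⱼ wⱼ Y_{tⱼ}²`, where `Y` is the time-varying AR(1)
recursion driven by `ξ`, `tⱼ = s - 1 + jT` and `wⱼ = K(xⱼ) (a_s(vⱼ) - a_s(u))`.

For `t ≤ t'` write `Y_{t'} = p Y_t + Z` with `p = ∏ a_m`, `|p| ≤ α^{t'-t}`, and `Z` centred and
independent of `Y_t`; expanding the squares gives `Cov(Y_t², Y_{t'}²) = p² Var(Y_t²) ≤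
α^{2(t'-t)} E Y_t⁴`. The recursion `E Y_{t+1}⁴ = a⁴ E Y_t⁴ + 6 a² E Y_t² E ξ² + E ξ⁴` bounds the
fourth moments uniformly (this is where `E ξ⁴ < ∞` enters), so the geometric decay of the
covariances gives `Var(∑ wⱼ Y_{tⱼ}²) = O(∑ wⱼ²)`.

Since `a_s` is Lipschitz and `K` decays exponentially, `wⱼ² = O(bₙ² e^{-β|xⱼ|})`, and the `xⱼ` form
a grid of mesh `1/(n bₙ)`, so `∑ wⱼ² = O(bₙ² · n bₙ)`. Hence `Var(Jₙ) = O(bₙ²) = O(bₙ^ρ)`.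
-/

open Finset Real
open scoped ENNReal

lemma one_le_lint {ρ : ℝ} (hρ : 1 < ρ) : 1 ≤ lint ρ := by
  have : 1 < ⌈ρ⌉₊ := Nat.lt_ceil.2 (by exact_mod_cast hρ)
  unfold lint; omega

lemma CHolder.exists_lipschitzOnWith {ρ : ℝ} {f : ℝ → ℝ} (hρ : 1 < ρ) (hf : CHolder ρ f) :
    ∃ L, LipschitzOnWith L f (Icc 0 1) := by
  have hC1 : ContDiffOn ℝ 1 f (Icc 0 1) := hf.1.of_le (by exact_mod_cast one_le_lint hρ)
  obtain ⟨C, hC⟩ := isCompact_Icc.exists_bound_of_continuousOn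
    (hC1.continuousOn_derivWithin (uniqueDiffOn_Icc one_pos) le_rfl)
  refine ⟨C.toNNReal, (convex_Icc 0 1).lipschitzOnWith_of_nnnorm_derivWithin_le
    (hC1.differentiableOn one_ne_zero) fun x hx => ?_⟩
  rw [← NNReal.coe_le_coe, coe_nnnorm]
  exact (hC x hx).trans (le_coe_toNNReal C)

lemma abs_le_mul_exp_of_bounded_of_tail {K : ℝ → ℝ} {M C β R : ℝ} (hβ : 0 ≤ β)
    (hM : ∀ x, |K x| ≤ M) (htail : ∀ x, R < |x| → |K x| ≤ C * exp (-(β * |x|))) (x : ℝ) :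
    |K x| ≤ max C (M * exp (β * R)) * exp (-(β * |x|)) := by
  rcases lt_or_ge R |x| with hx | hx
  · exact (htail x hx).trans (by gcongr; exact le_max_left _ _)
  · calc |K x| ≤ M * exp (β * R) * exp (-(β * |x|)) := by
          rw [mul_assoc, ← exp_add]
          have : 0 ≤ β * R + -(β * |x|) := by nlinarith
          nlinarith [one_le_exp this, hM x, abs_nonneg (K x)]
      _ ≤ _ := by gcongr; exact le_max_right _ _

lemma AssumpK.exists_abs_le_exp {K : ℝ → ℝ} (hK : AssumpK K) :
    ∃ β M, 0 < β ∧ ∀ x, |K x| ≤ M * exp (-(β * |x|)) := by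
  obtain ⟨-, ⟨M, hM⟩, -, -, β, hβ, hlim⟩ := hK
  rw [← Metric.cobounded_eq_cocompact] at hlim
  obtain ⟨R, -, hR⟩ := hasBasis_cobounded_norm.eventually_iff.1
    (hlim.eventually (Metric.ball_mem_nhds 0 one_pos))
  refine ⟨β, _, hβ, abs_le_mul_exp_of_bounded_of_tail hβ.le hM (C := 1) (R := R)
    fun x hx => ?_⟩
  have h := hR (show R ≤ ‖x‖ from hx.le)
  rw [dist_zero_right, norm_mul, norm_of_nonneg (exp_pos _).le, Real.norm_eq_abs] at h
  rw [one_mul, exp_neg, ← one_div, le_div_iff₀ (exp_pos _), mul_comm]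
  exact h.le

lemma AssumpKt.exists_abs_le_exp {K : ℝ → ℝ} (hK : AssumpKt K) :
    ∃ β M, 0 < β ∧ ∀ x, |K x| ≤ M * exp (-(β * |x|)) := by
  obtain ⟨-, ⟨M, hM⟩, -, -, B, -, hB⟩ := hK
  refine ⟨1, _, one_pos, abs_le_mul_exp_of_bounded_of_tail zero_le_one hM (C := 0) (R := B)
    fun x hx => ?_⟩
  simp [hB x hx]

lemma hasSum_pow_natAbs {q : ℝ} (hq0 : 0 ≤ q) (hq1 : q < 1) :
    HasSum (fun k : ℤ => q ^ k.natAbs) ((1 + q) / (1 - q)) := by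
  have hpos := hasSum_geometric_of_lt_one hq0 hq1
  have hsum := HasSum.of_nat_of_neg_add_one (f := fun k : ℤ => q ^ k.natAbs)
    (by simpa using hpos) (m' := q * (1 - q)⁻¹) <| by
      have hnat (n : ℕ) : (-1 + -(n : ℤ)).natAbs = n + 1 := by omega
      simpa [hnat, pow_succ'] using hpos.mul_left q
  convert hsum using 1
  field_simp

lemma sum_range_pow_natAbs_sub_le {q : ℝ} (hq0 : 0 ≤ q) (hq1 : q < 1) (n : ℕ) (m : ℤ) :
    ∑ j ∈ range n, q ^ ((j : ℤ) - m).natAbs ≤ (1 + q) / (1 - q) := by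
  have hinj : Set.InjOn (fun j : ℕ => (j : ℤ) - m) (Finset.range n : Set ℕ) :=
    fun i _ j _ h => by simpa using h
  rw [← sum_image (f := fun k : ℤ => q ^ k.natAbs) hinj]
  exact sum_le_hasSum _ (fun _ _ => by positivity) (hasSum_pow_natAbs hq0 hq1)

lemma sum_range_exp_neg_abs_le {β δ : ℝ} (hβ : 0 < β) (hδ : 0 < δ) (hβδ : β * δ ≤ 1)
    (c : ℝ) (n : ℕ) :
    ∑ j ∈ range n, exp (-(β * |c + j * δ|)) ≤ exp 1 * (exp 1 + 1) / (β * δ) := by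
  set y := β * δ
  have hy : 0 < y := by positivity
  set m : ℤ := ⌊-c / δ⌋
  have hterm (j : ℕ) : exp (-(β * |c + j * δ|)) ≤ exp y * exp (-y) ^ ((j : ℤ) - m).natAbs := by
    have hjm : (((j : ℤ) - m).natAbs : ℝ) ≤ |c + j * δ| / δ + 1 := by
      have h1 := Int.floor_le (-c / δ)
      have h2 := Int.lt_floor_add_one (-c / δ)
      have h3 : |c + j * δ| / δ = |j - -c / δ| := by
        rw [← abs_of_pos hδ, ← abs_div, abs_of_pos hδ]; congr 1; field_simp; ring
      rw [Nat.cast_natAbs, Int.cast_abs, h3]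
      push_cast
      calc |(j : ℝ) - m| ≤ |j - -c / δ| + |-c / δ - m| := abs_sub_le _ _ _
        _ ≤ |j - -c / δ| + 1 := by gcongr; rw [abs_le]; constructor <;> linarith
    rw [← exp_nat_mul, ← exp_add]
    gcongr
    have := mul_le_mul_of_nonneg_left hjm hy.le
    rw [mul_add, show y * (|c + j * δ| / δ) = β * |c + j * δ| by simp only [y]; field_simp]
      at this
    linarith
  have hq1 : exp (-y) < 1 := exp_lt_one_iff.2 (by linarith)
  calc ∑ j ∈ range n, exp (-(β * |c + j * δ|))
      ≤ ∑ j ∈ range n, exp y * exp (-y) ^ ((j : ℤ) - m).natAbs := sum_le_sum fun j _ => hterm j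
    _ ≤ exp y * ((1 + exp (-y)) / (1 - exp (-y))) := by
      rw [← mul_sum]; gcongr; exact sum_range_pow_natAbs_sub_le (exp_pos _).le hq1 n m
    _ = exp y * (exp y + 1) / (exp y - 1) := by
      rw [exp_neg]; field_simp
    _ ≤ exp 1 * (exp 1 + 1) / y := by
      have : y ≤ exp y - 1 := by linarith [add_one_le_exp y]
      gcongr

lemma sum_sum_abs_mul_abs_mul_pow_le {q : ℝ} (hq0 : 0 ≤ q) (hq1 : q < 1) (w : ℕ → ℝ) (n : ℕ) :
    ∑ j ∈ range n, ∑ k ∈ range n, |w j| * |w k| * q ^ ((j : ℤ) - k).natAbs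
      ≤ (1 + q) / (1 - q) * ∑ j ∈ range n, w j ^ 2 := by
  set c : ℕ → ℕ → ℝ := fun j k => q ^ ((k : ℤ) - j).natAbs
  have hc : ∀ j k : ℕ, q ^ ((j : ℤ) - k).natAbs = c k j := fun _ _ => rfl
  have hsymm : ∑ j ∈ range n, ∑ k ∈ range n, w k ^ 2 * c k j
      = ∑ j ∈ range n, ∑ k ∈ range n, w j ^ 2 * c j k := by
    rw [sum_comm]
  calc ∑ j ∈ range n, ∑ k ∈ range n, |w j| * |w k| * q ^ ((j : ℤ) - k).natAbs
      ≤ ∑ j ∈ range n, ∑ k ∈ range n, (w j ^ 2 * c j k + w k ^ 2 * c k j) / 2 := by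
        gcongr with j _ k _
        have hcjk : c k j = c j k := by simp only [c]; congr 1; omega
        rw [hc, hcjk, ← add_mul, mul_div_right_comm]
        gcongr ?_ * _
        nlinarith [sq_nonneg (|w j| - |w k|), sq_abs (w j), sq_abs (w k)]
    _ = ∑ j ∈ range n, w j ^ 2 * ∑ k ∈ range n, c j k := by
        simp_rw [← sum_div, sum_add_distrib, hsymm, mul_sum]
        ring
    _ ≤ ∑ j ∈ range n, w j ^ 2 * ((1 + q) / (1 - q)) := by
        gcongr with j
        exact sum_range_pow_natAbs_sub_le hq0 hq1 n j
    _ = (1 + q) / (1 - q) * ∑ j ∈ range n, w j ^ 2 := by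
        rw [mul_sum]; simp_rw [mul_comm]

lemma sq_mul_le_of_abs_le_exp {K : ℝ → ℝ} {β M : ℝ} (hβ : 0 < β)
    (hK : ∀ x, |K x| ≤ M * exp (-(β * |x|))) (x : ℝ) :
    (x * K x) ^ 2 ≤ 2 * (M / β) ^ 2 * exp (-(β * |x|)) := by
  have hy : (β * |x|) ^ 2 ≤ 2 * exp (β * |x|) := by
    have := pow_div_factorial_le_exp (β * |x|) (by positivity) 2
    norm_num [Nat.factorial] at this; linarith
  have hKsq : K x ^ 2 ≤ (M * exp (-(β * |x|))) ^ 2 := by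
    rw [← sq_abs]; exact pow_le_pow_left₀ (abs_nonneg _) (hK x) 2
  have hsplit : exp (-(β * |x|)) ^ 2 * exp (β * |x|) = exp (-(β * |x|)) := by
    rw [sq, mul_assoc, ← exp_add, neg_add_cancel, exp_zero, mul_one]
  calc (x * K x) ^ 2 = |x| ^ 2 * K x ^ 2 := by rw [mul_pow, sq_abs]
    _ ≤ |x| ^ 2 * (M * exp (-(β * |x|))) ^ 2 := by gcongr
    _ = M ^ 2 / β ^ 2 * (β * |x|) ^ 2 * exp (-(β * |x|)) ^ 2 := by field_simp
    _ ≤ M ^ 2 / β ^ 2 * (2 * exp (β * |x|)) * exp (-(β * |x|)) ^ 2 := by gcongr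
    _ = 2 * (M / β) ^ 2 * (exp (-(β * |x|)) ^ 2 * exp (β * |x|)) := by ring
    _ = 2 * (M / β) ^ 2 * exp (-(β * |x|)) := by rw [hsplit]

lemma sum_sq_kernel_mul_sub_le {K f : ℝ → ℝ} {β M b h u v₀ : ℝ} {L : NNReal} {n : ℕ}
    (hβ : 0 < β) (hb : 0 < b) (hh : 0 < h) (hβh : β * h ≤ b)
    (hK : ∀ x, |K x| ≤ M * exp (-(β * |x|))) (hf : LipschitzOnWith L f (Icc 0 1))
    (hu : u ∈ Icc (0 : ℝ) 1) (hv : ∀ j < n, v₀ + j * h ∈ Icc (0 : ℝ) 1) :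
    ∑ j ∈ range n, (K ((v₀ + j * h - u) / b) * (f (v₀ + j * h) - f u)) ^ 2
      ≤ 2 * (L * M / β) ^ 2 * (exp 1 * (exp 1 + 1) / β) * (b ^ 3 / h) := by
  set x : ℕ → ℝ := fun j => (v₀ + j * h - u) / b
  have hx (j : ℕ) : x j = (v₀ - u) / b + j * (h / b) := by simp only [x]; field_simp; ring
  have hterm : ∀ j < n, (K (x j) * (f (v₀ + j * h) - f u)) ^ 2
      ≤ L ^ 2 * b ^ 2 * (2 * (M / β) ^ 2 * exp (-(β * |x j|))) := by
    intro j hj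
    have hlip : |f (v₀ + j * h) - f u| ≤ L * (b * |x j|) := by
      have := hf.dist_le_mul _ (hv j hj) _ hu
      rwa [dist_eq_norm, dist_eq_norm, Real.norm_eq_abs, Real.norm_eq_abs,
        show v₀ + j * h - u = b * x j by simp only [x]; field_simp, abs_mul, abs_of_pos hb] at this
    calc (K (x j) * (f (v₀ + j * h) - f u)) ^ 2 ≤ (K (x j) * (L * (b * |x j|))) ^ 2 := by
          rw [mul_pow, mul_pow, ← sq_abs (f _ - f u)]
          gcongr
      _ = L ^ 2 * b ^ 2 * (x j * K (x j)) ^ 2 := by rw [mul_pow, mul_pow, mul_pow, sq_abs]; ring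
      _ ≤ _ := by gcongr; exact sq_mul_le_of_abs_le_exp hβ hK (x j)
  calc ∑ j ∈ range n, (K (x j) * (f (v₀ + j * h) - f u)) ^ 2
      ≤ ∑ j ∈ range n, L ^ 2 * b ^ 2 * (2 * (M / β) ^ 2 * exp (-(β * |x j|))) :=
        sum_le_sum fun j hj => hterm j (mem_range.1 hj)
    _ = L ^ 2 * b ^ 2 * (2 * (M / β) ^ 2)
          * ∑ j ∈ range n, exp (-(β * |(v₀ - u) / b + j * (h / b)|)) := by
        rw [mul_sum]
        exact sum_congr rfl fun j _ => by rw [hx]; ring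
    _ ≤ L ^ 2 * b ^ 2 * (2 * (M / β) ^ 2) * (exp 1 * (exp 1 + 1) / (β * (h / b))) := by
        gcongr
        exact sum_range_exp_neg_abs_le hβ (by positivity)
          (by rwa [mul_div_assoc', div_le_one hb]) _ n
    _ = _ := by field_simp

lemma sum_sq_kernel_grid_le {K f : ℝ → ℝ} {β M b u : ℝ} {L : NNReal} {n T s : ℕ}
    (hβ : 0 < β) (hb : 0 < b) (hT : 1 ≤ T) (hsT : s ≤ T) (hnb : β ≤ n * b)
    (hK : ∀ x, |K x| ≤ M * exp (-(β * |x|))) (hf : LipschitzOnWith L f (Icc 0 1))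
    (hu : u ∈ Icc (0 : ℝ) 1) :
    ∑ j ∈ range n, (K ((((s + j * T : ℕ) : ℝ) / (n * T) - u) / b)
        * (f (((s + j * T : ℕ) : ℝ) / (n * T)) - f u)) ^ 2
      ≤ 2 * (L * M / β) ^ 2 * (exp 1 * (exp 1 + 1) / β) * (b ^ 2 * (n * b)) := by
  have hn : (0 : ℝ) < n := pos_of_mul_pos_left (hβ.trans_le hnb) hb.le
  have hT' : (0 : ℝ) < T := by exact_mod_cast hT
  have hgrid (j : ℕ) : ((s + j * T : ℕ) : ℝ) / (n * T) = s / (n * T) + j * (1 / n) := by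
    push_cast; field_simp
  simp_rw [hgrid]
  convert sum_sq_kernel_mul_sub_le hβ hb (one_div_pos.2 hn)
    (by rwa [mul_one_div, div_le_iff₀ hn, mul_comm]) hK hf hu
    fun j hj => ?_ using 2
  · field_simp
  · rw [← hgrid]
    refine ⟨by positivity, (div_le_one (by positivity)).2 ?_⟩
    have : s + j * T ≤ n * T := by nlinarith
    exact_mod_cast this

lemma memLp_four_of_integrable_pow_four {Ω : Type*} [MeasurableSpace Ω] {μ : Measure Ω}
    {f : Ω → ℝ} (hf : AEStronglyMeasurable f μ) (h : Integrable (fun ω => f ω ^ 4) μ) :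
    MemLp f 4 μ := by
  refine (integrable_norm_rpow_iff hf (by norm_num) (by norm_num)).1
    (h.congr (.of_forall fun ω => ?_))
  simp only [ENNReal.toReal_ofNat, Real.rpow_ofNat, Real.norm_eq_abs, Even.pow_abs ⟨2, rfl⟩]

section Moments

variable {Ω : Type*} [MeasurableSpace Ω] {μ : Measure Ω}

lemma MeasureTheory.MemLp.integrable_pow_of_le [IsFiniteMeasure μ] {f : Ω → ℝ} {n k : ℕ}
    (hf : MemLp f n μ) (hk : k ≤ n) :
    Integrable (fun ω => f ω ^ k) μ := by
  refine (integrable_norm_iff (hf.1.pow k)).1 ?_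
  simpa [norm_pow] using (hf.mono_exponent (by exact_mod_cast hk)).integrable_norm_pow'

lemma MeasureTheory.MemLp.sq [IsFiniteMeasure μ] {f : Ω → ℝ} (hf : MemLp f 4 μ) :
    MemLp (fun ω => f ω ^ 2) 2 μ :=
  (memLp_two_iff_integrable_sq (f := fun ω => f ω ^ 2) (hf.1.pow 2)).2 <| by
    simpa only [← pow_mul] using hf.integrable_pow_of_le (k := 4) le_rfl

lemma ProbabilityTheory.IndepFun.integral_pow_mul_const_mul_add_pow [IsFiniteMeasure μ]
    {W Z : Ω → ℝ} (h : IndepFun W Z μ) {m n : ℕ} (hW : MemLp W (m + n : ℕ) μ) (hZ : MemLp Z n μ)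
    (p : ℝ) :
    ∫ ω, W ω ^ m * (p * W ω + Z ω) ^ n ∂μ
      = ∑ k ∈ range (n + 1),
          p ^ k * n.choose k * ((∫ ω, W ω ^ (m + k) ∂μ) * ∫ ω, Z ω ^ (n - k) ∂μ) := by
  have hind (a b : ℕ) : IndepFun (fun ω => W ω ^ a) (fun ω => Z ω ^ b) μ :=
    h.comp (measurable_id.pow_const a) (measurable_id.pow_const b)
  calc ∫ ω, W ω ^ m * (p * W ω + Z ω) ^ n ∂μ
      = ∫ ω, ∑ k ∈ range (n + 1), p ^ k * n.choose k * (W ω ^ (m + k) * Z ω ^ (n - k)) ∂μ := by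
        congr 1; funext ω
        rw [add_pow, mul_sum]
        exact sum_congr rfl fun k _ => by ring
    _ = _ := by
        rw [integral_finsetSum]
        · refine sum_congr rfl fun k hk => ?_
          rw [integral_const_mul, (hind _ _).integral_fun_mul_eq_mul_integral
            (hW.1.pow _) (hZ.1.pow _)]
        · intro k hk
          have := mem_range.1 hk
          exact ((hind _ _).integrable_mul (hW.integrable_pow_of_le (by omega))
            (hZ.integrable_pow_of_le (by omega))).const_mul _

variable [IsProbabilityMeasure μ]

namespace ProbabilityTheory.IndepFun

variable {W Z : Ω → ℝ}

lemma integral_const_mul_add_sq (h : IndepFun W Z μ) (hW : MemLp W 2 μ) (hZ : MemLp Z 2 μ)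
    (hZ0 : ∫ ω, Z ω ∂μ = 0) (p : ℝ) :
    ∫ ω, (p * W ω + Z ω) ^ 2 ∂μ = p ^ 2 * ∫ ω, W ω ^ 2 ∂μ + ∫ ω, Z ω ^ 2 ∂μ := by
  have := h.integral_pow_mul_const_mul_add_pow (m := 0) (n := 2) (by simpa using hW) hZ p
  simp only [pow_zero, one_mul] at this
  simp only [this, Nat.reduceAdd, zero_add, sum_range_succ, Finset.range_one, sum_singleton,
    pow_zero, Nat.choose_zero_right, Nat.cast_one, mul_one, integral_const, probReal_univ,
    smul_eq_mul, tsub_zero, one_mul, pow_one, Nat.choose_succ_self_right, Nat.cast_ofNat,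
    Nat.add_one_sub_one, hZ0, mul_zero, add_zero, Nat.choose_self, tsub_self]
  ring

lemma integral_const_mul_add_pow_four (h : IndepFun W Z μ) (hW : MemLp W 4 μ) (hZ : MemLp Z 4 μ)
    (hW0 : ∫ ω, W ω ∂μ = 0) (hZ0 : ∫ ω, Z ω ∂μ = 0) (p : ℝ) :
    ∫ ω, (p * W ω + Z ω) ^ 4 ∂μ
      = p ^ 4 * ∫ ω, W ω ^ 4 ∂μ + 6 * p ^ 2 * (∫ ω, W ω ^ 2 ∂μ) * ∫ ω, Z ω ^ 2 ∂μ
        + ∫ ω, Z ω ^ 4 ∂μ := by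
  have := h.integral_pow_mul_const_mul_add_pow (m := 0) (n := 4) (by simpa using hW) hZ p
  simp only [pow_zero, one_mul] at this
  simp only [this, Nat.reduceAdd, zero_add, sum_range_succ, Finset.range_one, sum_singleton,
    pow_zero, Nat.choose, Nat.cast_one, mul_one, integral_const, probReal_univ, smul_eq_mul,
    tsub_zero, one_mul, pow_one, add_zero, Nat.cast_ofNat, hW0, Nat.add_one_sub_one, zero_mul,
    mul_zero, Nat.reduceSub, hZ0, tsub_self]
  ring

lemma covariance_sq_const_mul_add_sq (h : IndepFun W Z μ) (hW : MemLp W 4 μ) (hZ : MemLp Z 4 μ)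
    (hZ0 : ∫ ω, Z ω ∂μ = 0) (p : ℝ) :
    cov[fun ω => W ω ^ 2, fun ω => (p * W ω + Z ω) ^ 2; μ]
      = p ^ 2 * Var[fun ω => W ω ^ 2; μ] := by
  have hmix := h.integral_pow_mul_const_mul_add_pow (m := 2) (n := 2) hW
    (hZ.mono_exponent (by norm_num)) p
  have hsum := h.integral_const_mul_add_sq (hW.mono_exponent (by norm_num))
    (hZ.mono_exponent (by norm_num)) hZ0 p
  rw [covariance_eq_sub hW.sq (MemLp.sq (f := fun ω => p * W ω + Z ω)
    ((hW.const_mul p).add hZ)), variance_eq_sub hW.sq]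
  simp only [Pi.mul_apply, Pi.pow_apply, ← pow_mul]
  rw [hmix, hsum]
  simp only [Nat.reduceAdd, sum_range_succ, Finset.range_one, sum_singleton, pow_zero,
    Nat.choose_zero_right, Nat.cast_one, mul_one, add_zero, tsub_zero, one_mul, pow_one,
    Nat.choose_succ_self_right, Nat.cast_ofNat, Nat.add_one_sub_one, hZ0, mul_zero, Nat.choose_self,
    tsub_self, integral_const, probReal_univ, smul_eq_mul, Nat.reduceMul]
  ring

end ProbabilityTheory.IndepFun

lemma integral_sq_sub_sq_integral_eq {J S : Ω → ℝ} {c : ℝ} (hJ : J =ᵐ[μ] fun ω => c * S ω)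
    (hS : MemLp S 2 μ) :
    ∫ ω, J ω ^ 2 ∂μ - (∫ ω, J ω ∂μ) ^ 2 = c ^ 2 * Var[S; μ] := by
  rw [← variance_const_mul, variance_eq_sub (hS.const_mul c)]
  congr 1
  · exact integral_congr_ae (hJ.fun_comp (· ^ 2))
  · rw [integral_congr_ae hJ]

end Moments

/-- The recursion `Y t = d t * Y (t - 1) + ξ t` for `t > r`, started from `Y r = 0`, unrolled. -/
def arProcess {Ω : Type*} (d : ℕ → ℝ) (ξ : ℕ → Ω → ℝ) (r t : ℕ) (ω : Ω) : ℝ :=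
  ∑ i ∈ Ioc r t, (∏ m ∈ Ioc i t, d m) * ξ i ω

section arProcess

variable {Ω : Type*} {d : ℕ → ℝ} {ξ : ℕ → Ω → ℝ}

lemma arProcess_self (t : ℕ) : arProcess d ξ t t = 0 := by
  funext ω; simp [arProcess]

lemma arProcess_eq_prod_mul_add {r t t' : ℕ} (hrt : r ≤ t) (htt' : t ≤ t') (ω : Ω) :
    arProcess d ξ r t' ω = (∏ m ∈ Ioc t t', d m) * arProcess d ξ r t ω + arProcess d ξ t t' ω := by
  simp only [arProcess]
  rw [mul_sum, ← sum_Ioc_consecutive _ hrt htt']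
  congr 1
  refine sum_congr rfl fun i hi => ?_
  rw [← prod_Ioc_consecutive _ (mem_Ioc.1 hi).2 htt']
  ring

lemma arProcess_succ {r t : ℕ} (hrt : r ≤ t) (ω : Ω) :
    arProcess d ξ r (t + 1) ω = d (t + 1) * arProcess d ξ r t ω + ξ (t + 1) ω := by
  rw [arProcess_eq_prod_mul_add hrt t.le_succ]
  simp [arProcess, Nat.Ioc_succ_singleton]

variable [MeasurableSpace Ω] {μ : Measure Ω}

lemma ae_eq_arProcess {X : ℕ → Ω → ℝ} {N : ℕ} (h0 : ∀ᵐ ω ∂μ, X 0 ω = 0)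
    (hrec : ∀ t, 1 ≤ t → t ≤ N → ∀ ω, X t ω = d t * X (t - 1) ω + ξ t ω) :
    ∀ t ≤ N, X t =ᵐ[μ] arProcess d ξ 0 t := by
  intro t ht
  induction t with
  | zero => rw [arProcess_self]; exact h0
  | succ t ih =>
    filter_upwards [ih (by omega)] with ω hω
    rw [hrec (t + 1) (by omega) ht, arProcess_succ (Nat.zero_le t), Nat.add_sub_cancel, hω]


lemma memLp_arProcess {p : ℝ≥0∞} (hξ : ∀ i, MemLp (ξ i) p μ) (r t : ℕ) :
    MemLp (arProcess d ξ r t) p μ :=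
  memLp_finsetSum _ fun i _ => (hξ i).const_mul _

lemma integral_arProcess (hξ : ∀ i, Integrable (ξ i) μ) (hξ0 : ∀ i, ∫ ω, ξ i ω ∂μ = 0)
    (r t : ℕ) : ∫ ω, arProcess d ξ r t ω ∂μ = 0 := by
  simp only [arProcess]
  rw [integral_finsetSum _ fun i _ => (hξ i).const_mul _]
  simp [integral_const_mul, hξ0]

lemma indepFun_arProcess (hind : iIndepFun ξ μ) (hξ : ∀ i, AEMeasurable (ξ i) μ) (r t t' : ℕ) :
    IndepFun (arProcess d ξ r t) (arProcess d ξ t t') μ := by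
  have hdisj : Disjoint (Finset.Ioc r t) (Finset.Ioc t t') :=
    disjoint_left.2 fun i hi hi' => by simp only [Finset.mem_Ioc] at hi hi'; omega
  have hlin (s : Finset ℕ) (c : ℕ → ℝ) : Measurable fun v : s → ℝ => ∑ i : s, c i * v i :=
    Finset.measurable_sum _ fun i _ => (measurable_pi_apply i).const_mul _
  convert (hind.indepFun_finset₀ _ _ hdisj hξ).comp (hlin _ fun i => ∏ m ∈ Ioc i t, d m)
    (hlin _ fun i => ∏ m ∈ Ioc i t', d m) using 1 <;>
  · funext ω
    simp only [arProcess, Function.comp_apply]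
    exact (sum_coe_sort _ fun i => _ * ξ i ω).symm

lemma indepFun_arProcess_xi_succ (hind : iIndepFun ξ μ) (hξ : ∀ i, AEMeasurable (ξ i) μ)
    (r t : ℕ) : IndepFun (arProcess d ξ r t) (ξ (t + 1)) μ := by
  have h := indepFun_arProcess (d := d) hind hξ r t (t + 1)
  have hξt : arProcess d ξ t (t + 1) = ξ (t + 1) := by
    funext ω; simp [arProcess_succ le_rfl, arProcess_self]
  rwa [hξt] at h

end arProcess

section arMoments

variable {Ω : Type*} [MeasurableSpace Ω] {μ : Measure Ω} [IsProbabilityMeasure μ]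
  {d : ℕ → ℝ} {ξ : ℕ → Ω → ℝ} {α σ2 μ4 : ℝ}

lemma integral_arProcess_sq_le (hind : iIndepFun ξ μ) (hξ : ∀ i, MemLp (ξ i) 2 μ)
    (hξ0 : ∀ i, ∫ ω, ξ i ω ∂μ = 0) (hσ : ∀ i, ∫ ω, ξ i ω ^ 2 ∂μ ≤ σ2) (hα1 : α < 1) (t : ℕ)
    (hd : ∀ m ≤ t, |d m| ≤ α) : ∫ ω, arProcess d ξ 0 t ω ^ 2 ∂μ ≤ σ2 / (1 - α ^ 2) := by
  have hα0 : 0 ≤ α := (abs_nonneg _).trans (hd 0 (Nat.zero_le _))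
  have hα2 : 0 < 1 - α ^ 2 := by nlinarith
  have hσ2 : 0 ≤ σ2 := (integral_nonneg fun ω => sq_nonneg (ξ 0 ω)).trans (hσ 0)
  induction t with
  | zero => simpa [arProcess_self] using div_nonneg hσ2 hα2.le
  | succ t ih =>
    simp_rw [arProcess_succ (Nat.zero_le t)]
    rw [(indepFun_arProcess_xi_succ hind (fun i => (hξ i).1.aemeasurable) 0 t
      ).integral_const_mul_add_sq (memLp_arProcess hξ 0 t) (hξ _) (hξ0 _)]
    have hdt1 := abs_le.1 (hd (t + 1) le_rfl)
    have hdt : d (t + 1) ^ 2 ≤ α ^ 2 := sq_le_sq' hdt1.1 hdt1.2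
    calc d (t + 1) ^ 2 * ∫ ω, arProcess d ξ 0 t ω ^ 2 ∂μ + ∫ ω, ξ (t + 1) ω ^ 2 ∂μ
        ≤ α ^ 2 * (σ2 / (1 - α ^ 2)) + σ2 :=
          add_le_add (mul_le_mul hdt (ih fun m hm => hd m (hm.trans t.le_succ))
            (integral_nonneg fun ω => sq_nonneg _) (sq_nonneg α)) (hσ _)
      _ = σ2 / (1 - α ^ 2) := by field_simp; ring

lemma integral_arProcess_pow_four_le (hind : iIndepFun ξ μ) (hξ : ∀ i, MemLp (ξ i) 4 μ)
    (hξ0 : ∀ i, ∫ ω, ξ i ω ∂μ = 0) (hσ : ∀ i, ∫ ω, ξ i ω ^ 2 ∂μ ≤ σ2)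
    (hμ4 : ∀ i, ∫ ω, ξ i ω ^ 4 ∂μ ≤ μ4) (hα1 : α < 1) (t : ℕ) (hd : ∀ m ≤ t, |d m| ≤ α) :
    ∫ ω, arProcess d ξ 0 t ω ^ 4 ∂μ
      ≤ (6 * α ^ 2 * (σ2 / (1 - α ^ 2)) * σ2 + μ4) / (1 - α ^ 4) := by
  have hξ2 i : MemLp (ξ i) 2 μ := (hξ i).mono_exponent (by norm_num)
  have hα0 : 0 ≤ α := (abs_nonneg _).trans (hd 0 (Nat.zero_le _))
  have hα4 : 0 < 1 - α ^ 4 := by nlinarith [pow_le_one₀ hα0 hα1.le (n := 2)]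
  have hσ2 : 0 ≤ σ2 := (integral_nonneg fun ω => sq_nonneg (ξ 0 ω)).trans (hσ 0)
  have hμ40 : 0 ≤ μ4 :=
    (integral_nonneg fun ω => Even.pow_nonneg (by decide) (ξ 0 ω)).trans (hμ4 0)
  have hB : 0 ≤ σ2 / (1 - α ^ 2) := div_nonneg hσ2 (by nlinarith)
  have hnum : 0 ≤ 6 * α ^ 2 * (σ2 / (1 - α ^ 2)) * σ2 + μ4 := by
    have := mul_nonneg (mul_nonneg (by positivity : (0 : ℝ) ≤ 6 * α ^ 2) hB) hσ2
    linarith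
  induction t with
  | zero => simpa [arProcess_self] using div_nonneg hnum hα4.le
  | succ t ih =>
    simp_rw [arProcess_succ (Nat.zero_le t)]
    rw [(indepFun_arProcess_xi_succ hind (fun i => (hξ i).1.aemeasurable) 0 t
      ).integral_const_mul_add_pow_four (memLp_arProcess hξ 0 t) (hξ _)
      (integral_arProcess (fun i => (hξ i).integrable (by norm_num)) hξ0 0 t) (hξ0 _)]
    have hdt1 := abs_le.1 (hd (t + 1) le_rfl)
    have hd2 : d (t + 1) ^ 2 ≤ α ^ 2 := sq_le_sq' hdt1.1 hdt1.2
    have hd4 : d (t + 1) ^ 4 ≤ α ^ 4 := by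
      simpa only [← pow_mul] using pow_le_pow_left₀ (sq_nonneg _) hd2 2
    have hdt : ∀ m ≤ t, |d m| ≤ α := fun m hm => hd m (hm.trans t.le_succ)
    calc d (t + 1) ^ 4 * ∫ ω, arProcess d ξ 0 t ω ^ 4 ∂μ
          + 6 * d (t + 1) ^ 2 * (∫ ω, arProcess d ξ 0 t ω ^ 2 ∂μ) * ∫ ω, ξ (t + 1) ω ^ 2 ∂μ
          + ∫ ω, ξ (t + 1) ω ^ 4 ∂μ
        ≤ α ^ 4 * ((6 * α ^ 2 * (σ2 / (1 - α ^ 2)) * σ2 + μ4) / (1 - α ^ 4))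
          + 6 * α ^ 2 * (σ2 / (1 - α ^ 2)) * σ2 + μ4 := by
          gcongr ?_ * ?_ + 6 * ?_ * ?_ * ?_ + ?_
          · exact ih hdt
          · exact integral_arProcess_sq_le hind hξ2 hξ0 hσ hα1 t hdt
          · exact hσ _
          · exact hμ4 _
      _ = (6 * α ^ 2 * (σ2 / (1 - α ^ 2)) * σ2 + μ4) / (1 - α ^ 4) := by field_simp; ring

end arMoments

section arCovariance

variable {Ω : Type*} [MeasurableSpace Ω] {μ : Measure Ω} [IsProbabilityMeasure μ]
  {d : ℕ → ℝ} {ξ : ℕ → Ω → ℝ} {α : ℝ}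

lemma abs_covariance_sq_arProcess_le (hind : iIndepFun ξ μ) (hξ : ∀ i, MemLp (ξ i) 4 μ)
    (hξ0 : ∀ i, ∫ ω, ξ i ω ∂μ = 0) {t t' : ℕ} (htt' : t ≤ t')
    (hd : ∀ m ∈ Finset.Ioc t t', |d m| ≤ α) :
    |cov[fun ω => arProcess d ξ 0 t ω ^ 2, fun ω => arProcess d ξ 0 t' ω ^ 2; μ]|
      ≤ α ^ (2 * (t' - t)) * ∫ ω, arProcess d ξ 0 t ω ^ 4 ∂μ := by
  set p := ∏ m ∈ Ioc t t', d m
  have hp : |p| ≤ α ^ (t' - t) := by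
    rw [abs_prod, ← Nat.card_Ioc, ← prod_const]
    exact prod_le_prod (fun _ _ => abs_nonneg _) hd
  have hsplit : (fun ω => arProcess d ξ 0 t' ω ^ 2)
      = fun ω => (p * arProcess d ξ 0 t ω + arProcess d ξ t t' ω) ^ 2 := by
    funext ω; rw [arProcess_eq_prod_mul_add (Nat.zero_le t) htt']
  rw [hsplit, (indepFun_arProcess hind (fun i => (hξ i).1.aemeasurable) 0 t t'
    ).covariance_sq_const_mul_add_sq (memLp_arProcess hξ 0 t) (memLp_arProcess hξ t t')
    (integral_arProcess (fun i => (hξ i).integrable (by norm_num)) hξ0 t t') p,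
    abs_of_nonneg (mul_nonneg (sq_nonneg p) (variance_nonneg _ _)), pow_mul']
  have hvar := variance_le_expectation_sq (μ := μ) ((memLp_arProcess (d := d) hξ 0 t).sq.1)
  simp only [Pi.pow_apply, ← pow_mul] at hvar
  exact mul_le_mul (sq_le_sq' (abs_le.1 hp).1 (abs_le.1 hp).2) hvar (variance_nonneg _ _)
    (sq_nonneg _)

lemma variance_sum_mul_sq_arProcess_le (hind : iIndepFun ξ μ) (hξ : ∀ i, MemLp (ξ i) 4 μ)
    (hξ0 : ∀ i, ∫ ω, ξ i ω ∂μ = 0) (hα1 : α < 1) {N T t₀ n : ℕ} (hT : 1 ≤ T)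
    (hd : ∀ m ≤ N, |d m| ≤ α) (hN : ∀ j < n, t₀ + j * T ≤ N) {M4 : ℝ}
    (hM4 : ∀ t ≤ N, ∫ ω, arProcess d ξ 0 t ω ^ 4 ∂μ ≤ M4) (w : ℕ → ℝ) :
    Var[fun ω => ∑ j ∈ range n, w j * arProcess d ξ 0 (t₀ + j * T) ω ^ 2; μ]
      ≤ M4 * ((1 + α ^ (2 * T)) / (1 - α ^ (2 * T))) * ∑ j ∈ range n, w j ^ 2 := by
  set Y : ℕ → Ω → ℝ := fun j ω => arProcess d ξ 0 (t₀ + j * T) ω ^ 2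
  have hα0 : 0 ≤ α := (abs_nonneg _).trans (hd 0 (Nat.zero_le N))
  have hcov (j k : ℕ) (hjk : j ≤ k) (hk : k < n) :
      |cov[Y j, Y k; μ]| ≤ M4 * (α ^ (2 * T)) ^ (k - j) := by
    have hexp : α ^ (2 * (t₀ + k * T - (t₀ + j * T))) = (α ^ (2 * T)) ^ (k - j) := by
      rw [← pow_mul, Nat.add_sub_add_left, ← Nat.sub_mul]; ring_nf
    calc |cov[Y j, Y k; μ]|
        ≤ α ^ (2 * (t₀ + k * T - (t₀ + j * T))) * ∫ ω, arProcess d ξ 0 (t₀ + j * T) ω ^ 4 ∂μ :=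
          abs_covariance_sq_arProcess_le hind hξ hξ0 (by gcongr)
            fun m hm => hd m ((mem_Ioc.1 hm).2.trans (hN k hk))
      _ ≤ (α ^ (2 * T)) ^ (k - j) * M4 := by
          rw [hexp]; gcongr; exact hM4 _ (hN j (hjk.trans_lt hk))
      _ = M4 * (α ^ (2 * T)) ^ (k - j) := mul_comm _ _
  have hcov' : ∀ j < n, ∀ k < n,
      |cov[Y j, Y k; μ]| ≤ M4 * (α ^ (2 * T)) ^ ((j : ℤ) - k).natAbs := by
    intro j hj k hk
    rcases le_total j k with hjk | hkj
    · simpa [show ((j : ℤ) - k).natAbs = k - j by omega] using hcov j k hjk hk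
    · simpa [covariance_comm, show ((j : ℤ) - k).natAbs = j - k by omega] using hcov k j hkj hj
  calc Var[fun ω => ∑ j ∈ range n, w j * Y j ω; μ]
      = ∑ j ∈ range n, ∑ k ∈ range n, w j * w k * cov[Y j, Y k; μ] := by
        rw [variance_fun_sum' fun j _ => ((memLp_arProcess hξ 0 _).sq).const_mul (w j)]
        simp only [covariance_const_mul_left, covariance_const_mul_right]
        exact sum_congr rfl fun j _ => sum_congr rfl fun k _ => by ring
    _ ≤ ∑ j ∈ range n, ∑ k ∈ range n,
          M4 * (|w j| * |w k| * (α ^ (2 * T)) ^ ((j : ℤ) - k).natAbs) := by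
        refine sum_le_sum fun j hj => sum_le_sum fun k hk => ?_
        calc w j * w k * cov[Y j, Y k; μ] ≤ |w j| * |w k| * |cov[Y j, Y k; μ]| := by
              rw [← abs_mul, ← abs_mul]; exact le_abs_self _
          _ ≤ |w j| * |w k| * (M4 * (α ^ (2 * T)) ^ ((j : ℤ) - k).natAbs) := by
              gcongr; exact hcov' j (mem_range.1 hj) k (mem_range.1 hk)
          _ = _ := by ring
    _ ≤ M4 * ((1 + α ^ (2 * T)) / (1 - α ^ (2 * T)) * ∑ j ∈ range n, w j ^ 2) := by
        simp_rw [← mul_sum]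
        gcongr
        · exact (integral_nonneg fun ω => Even.pow_nonneg (by decide) _).trans
            (hM4 0 (Nat.zero_le N))
        · exact sum_sum_abs_mul_abs_mul_pow_le (by positivity) (pow_lt_one₀ hα0 hα1 (by omega)) w n
    _ = _ := by ring

end arCovariance

lemma integral_sq_sub_sq_integral_bias_le {Ω : Type*} [MeasurableSpace Ω] {μ : Measure Ω}
    [IsProbabilityMeasure μ] {ξ : ℕ → Ω → ℝ} (hind : iIndepFun ξ μ) (hξ : ∀ i, MemLp (ξ i) 4 μ)
    (hξ0 : ∀ i, ∫ ω, ξ i ω ∂μ = 0) {α M4 : ℝ} (hα1 : α < 1) {T s n : ℕ} (hT : 1 ≤ T)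
    (hs1 : 1 ≤ s) (hsT : s ≤ T) {d : ℕ → ℝ} (hd : ∀ m ≤ n * T, |d m| ≤ α)
    (hM4 : ∀ t ≤ n * T, ∫ ω, arProcess d ξ 0 t ω ^ 4 ∂μ ≤ M4) {Y : ℕ → Ω → ℝ}
    (hY : ∀ t ≤ n * T, Y t =ᵐ[μ] arProcess d ξ 0 t) {K f : ℝ → ℝ} {β MK b u : ℝ} {L : NNReal}
    (hβ : 0 < β) (hb : 0 < b) (hnb : β ≤ n * b) (hK : ∀ x, |K x| ≤ MK * exp (-(β * |x|)))
    (hf : LipschitzOnWith L f (Icc 0 1)) (hu : u ∈ Icc (0 : ℝ) 1) {J : Ω → ℝ}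
    (hJ : ∀ ω, J ω = (1 / Real.sqrt (n * b)) * ∑ j ∈ range n,
      K ((((s + j * T : ℕ) : ℝ) / (n * T) - u) / b) * (Y (s + j * T - 1) ω) ^ 2 *
        (f (((s + j * T : ℕ) : ℝ) / (n * T)) - f u)) :
    ∫ ω, J ω ^ 2 ∂μ - (∫ ω, J ω ∂μ) ^ 2
      ≤ M4 * ((1 + α ^ (2 * T)) / (1 - α ^ (2 * T)))
        * (2 * (L * MK / β) ^ 2 * (exp 1 * (exp 1 + 1) / β)) * b ^ 2 := by
  set w : ℕ → ℝ := fun j => K ((((s + j * T : ℕ) : ℝ) / (n * T) - u) / b)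
    * (f (((s + j * T : ℕ) : ℝ) / (n * T)) - f u)
  set S : Ω → ℝ := fun ω => ∑ j ∈ range n, w j * arProcess d ξ 0 (s - 1 + j * T) ω ^ 2
  have hjT (j : ℕ) (hj : j < n) : s + j * T ≤ n * T := by nlinarith
  have hJS : J =ᵐ[μ] fun ω => 1 / Real.sqrt (n * b) * S ω := by
    have hYj := (eventually_all_finset (range n)).2 fun j hj =>
      hY (s + j * T - 1) ((Nat.sub_le _ _).trans (hjT j (mem_range.1 hj)))
    filter_upwards [hYj] with ω hω
    rw [hJ ω]
    refine congrArg (_ * ·) (sum_congr rfl fun j hj => ?_)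
    rw [hω j hj, show s + j * T - 1 = s - 1 + j * T by omega]
    ring
  have hα0 : 0 ≤ α := (abs_nonneg _).trans (hd 0 (Nat.zero_le _))
  have hγ : α ^ (2 * T) < 1 := pow_lt_one₀ hα0 hα1 (by omega)
  have hM4G : 0 ≤ M4 * ((1 + α ^ (2 * T)) / (1 - α ^ (2 * T))) := mul_nonneg
    ((integral_nonneg fun ω => Even.pow_nonneg (by decide) _).trans (hM4 0 (Nat.zero_le _)))
    (div_nonneg (by positivity) (by linarith))
  have hnb0 : 0 < (n : ℝ) * b := hβ.trans_le hnb
  have hn : (n : ℝ) ≠ 0 := (pos_of_mul_pos_left hnb0 hb.le).ne'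
  have hvar := variance_sum_mul_sq_arProcess_le (t₀ := s - 1) hind hξ hξ0 hα1 hT hd
    (fun j hj => by have := hjT j hj; omega) hM4 w
  have hw := sum_sq_kernel_grid_le hβ hb hT hsT hnb hK hf hu
  rw [integral_sq_sub_sq_integral_eq hJS (memLp_finsetSum _ fun j _ =>
    ((memLp_arProcess hξ 0 _).sq).const_mul (w j))]
  calc (1 / Real.sqrt (n * b)) ^ 2 * Var[S; μ]
      ≤ 1 / (n * b) * (M4 * ((1 + α ^ (2 * T)) / (1 - α ^ (2 * T)))
          * (2 * (L * MK / β) ^ 2 * (exp 1 * (exp 1 + 1) / β) * (b ^ 2 * (n * b)))) := by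
        rw [div_pow, one_pow, Real.sq_sqrt hnb0.le]
        gcongr
        exact hvar.trans (mul_le_mul_of_nonneg_left hw hM4G)
    _ = _ := by
        have : 1 - α ^ (2 * T) ≠ 0 := by linarith
        field_simp

lemma mul_sq_le_mul_add_rpow {C b ρ x : ℝ} (hb : 0 < b) (hb1 : b ≤ 1) (hρ : ρ ≤ 2) (hx : 0 ≤ x) :
    C * b ^ 2 ≤ (|C| + 1) * (x + b ^ ρ) := by
  rw [← Real.rpow_two]
  calc C * b ^ (2 : ℝ) ≤ |C| * b ^ ρ :=
        mul_le_mul (le_abs_self C) (Real.rpow_le_rpow_of_exponent_ge hb hb1 hρ)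
          (Real.rpow_nonneg hb.le 2) (abs_nonneg C)
    _ ≤ (|C| + 1) * (x + b ^ ρ) :=
        mul_le_mul (by linarith) (le_add_of_nonneg_left hx) (Real.rpow_nonneg hb.le ρ)
          (by positivity)

theorem statement17_general
    {Ω : Type*} [MeasureSpace Ω] (hprob : IsProbabilityMeasure (ℙ : Measure Ω))
    (T : ℕ) (hT : 1 ≤ T) (ρ : ℝ) (hρ1 : 1 < ρ) (hρ2 : ρ ≤ 2)
    -- Assumption A(ρ)
    (a : ℤ → ℝ → ℝ) (α : ℝ) (hα1 : α < 1)
    (hbdd : ∀ (t : ℤ), ∀ v ∈ Set.Icc (0:ℝ) 1, |a t v| ≤ α)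
    (hreg : ∀ t : ℤ, CHolder ρ (a t))
    -- the i.i.d. innovations, with mean 0 and variance σ² ∈ (0,∞)
    (ξ : ℕ → Ω → ℝ)
    (hξindep : iIndepFun ξ ℙ)
    (hξid : ∀ t, IdentDistrib (ξ t) (ξ 0) ℙ ℙ)
    (hξmean : ∫ ω, ξ 0 ω ∂ℙ = 0)
    -- the process, started from X₀ = 0 almost surely
    (X : ℕ → ℕ → Ω → ℝ)
    (hXinit : ∀ n, ∀ᵐ ω ∂ℙ, X n 0 ω = 0)
    (hXrec : ∀ n t, 1 ≤ t → t ≤ n * T →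
      ∀ ω, X n t ω = a (t : ℤ) ((t : ℝ) / ((n : ℝ) * T)) * X n (t - 1) ω + ξ t ω)
    -- fourth order moment assumptions on the innovations
    (hξ4int : Integrable (fun ω => (ξ 0 ω) ^ 4) ℙ)
    -- the kernel, the bandwidths and the constants Aₙ
    (K : ℝ → ℝ) (hK : AssumpK K ∨ AssumpKt K)
    (b : ℕ → ℝ) (hbpos : ∀ n, 0 < b n)
    (hb0 : Tendsto b atTop (nhds 0))
    (hnb : Tendsto (fun n : ℕ => (n : ℝ) * b n) atTop atTop)
    (A : ℕ → ℝ)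
    (hKA : (AssumpKt K ∧ ∀ n, A n = 1) ∨ (AssumpK K ∧ ∀ n : ℕ, A n = Real.log n))
    -- the point of estimation and the phase
    (u : ℝ) (hu : u ∈ Set.Ioo (0:ℝ) 1) (s : ℕ) (hs1 : 1 ≤ s) (hsT : s ≤ T)
    -- the bias term Jₙ
    (J : ℕ → Ω → ℝ)
    (hJ : ∀ n ω, J n ω = (1 / Real.sqrt ((n : ℝ) * b n)) * ∑ j ∈ Finset.range n,
      K ((((s + j * T : ℕ) : ℝ) / ((n : ℝ) * T) - u) / b n) *
        (X n (s + j * T - 1) ω) ^ 2 *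
        (a (s : ℤ) (((s + j * T : ℕ) : ℝ) / ((n : ℝ) * T)) - a (s : ℤ) u))
 :
    ∃ C : ℝ, 0 < C ∧ ∀ᶠ n : ℕ in atTop,
      (∫ ω, (J n ω) ^ 2 ∂ℙ) - (∫ ω, J n ω ∂ℙ) ^ 2
        ≤ C * (A n / ((n : ℝ) * b n) + b n ^ ρ) := by
  have hξ4 (i : ℕ) : MemLp (ξ i) 4 ℙ := (hξid i).symm.memLp_snd <|
    memLp_four_of_integrable_pow_four (hξid 0).aemeasurable_fst.aestronglyMeasurable hξ4int
  have hmoment (i k : ℕ) : ∫ ω, ξ i ω ^ k ∂ℙ = ∫ ω, ξ 0 ω ^ k ∂ℙ :=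
    ((hξid i).comp (measurable_id.pow_const k)).integral_eq
  have hξ0 (i : ℕ) : ∫ ω, ξ i ω ∂ℙ = 0 := (hξid i).integral_eq.trans hξmean
  obtain ⟨β, MK, hβ, hKexp⟩ := hK.elim AssumpK.exists_abs_le_exp AssumpKt.exists_abs_le_exp
  obtain ⟨L, hL⟩ := (hreg s).exists_lipschitzOnWith hρ1
  set σ2 := ∫ ω, ξ 0 ω ^ 2 ∂ℙ
  set M4 := (6 * α ^ 2 * (σ2 / (1 - α ^ 2)) * σ2 + ∫ ω, ξ 0 ω ^ 4 ∂ℙ) / (1 - α ^ 4)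
  set C := M4 * ((1 + α ^ (2 * T)) / (1 - α ^ (2 * T)))
    * (2 * (L * MK / β) ^ 2 * (exp 1 * (exp 1 + 1) / β))
  refine ⟨|C| + 1, by positivity, ?_⟩
  have hA : ∀ᶠ n : ℕ in atTop, 0 ≤ A n := by
    rcases hKA with ⟨-, h⟩ | ⟨-, h⟩
    · exact .of_forall fun n => (h n).symm ▸ zero_le_one
    · filter_upwards [eventually_ge_atTop 1] with n hn
      exact (h n).symm ▸ Real.log_nonneg (by exact_mod_cast hn)
  filter_upwards [hA, hb0.eventually_lt_const one_pos, hnb.eventually_ge_atTop β]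
    with n hAn hb1 hnbβ
  have hd (m : ℕ) (hm : m ≤ n * T) : |a m (m / (n * T))| ≤ α :=
    hbdd m _ ⟨by positivity, div_le_one_of_le₀ (by exact_mod_cast hm) (by positivity)⟩
  have hM4 (t : ℕ) (ht : t ≤ n * T) :
      ∫ ω, arProcess (fun m => a m (m / (n * T))) ξ 0 t ω ^ 4 ∂ℙ ≤ M4 :=
    integral_arProcess_pow_four_le hξindep hξ4 hξ0 (fun i => (hmoment i 2).le)
      (fun i => (hmoment i 4).le) hα1 t fun m hm => hd m (hm.trans ht)
  exact (integral_sq_sub_sq_integral_bias_le hξindep hξ4 hξ0 hα1 hT hs1 hsT hd hM4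
    (ae_eq_arProcess (hXinit n) (hXrec n)) hβ (hbpos n) hnbβ hKexp hL ⟨hu.1.le, hu.2.le⟩
    (hJ n)).trans
      (mul_sq_le_mul_add_rpow (hbpos n) hb1.le hρ2 (div_nonneg hAn (hβ.trans_le hnbβ).le))

/-- Under Assumption A(ρ) with `1 < ρ ≤ 2`, `X₀ = 0` a.s.,
`E[ξ₀⁴] < ∞` and `E[ξ₀³] = 0`, for a kernel `K` satisfying (K) or (K̃) and ker(ρ),
one has, for `n` large enough, `Var(Jₙ) ≤ C (Aₙ/(n bₙ) + bₙ^ρ)`. -/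
theorem statement17
    {Ω : Type*} [MeasureSpace Ω] (hprob : IsProbabilityMeasure (ℙ : Measure Ω))
    (T : ℕ) (hT : 1 ≤ T) (ρ : ℝ) (hρ1 : 1 < ρ) (hρ2 : ρ ≤ 2)
    -- Assumption A(ρ)
    (a : ℤ → ℝ → ℝ) (α : ℝ) (hα1 : α < 1)
    (hper : ∀ (t : ℤ) (v : ℝ), a (t + T) v = a t v)
    (hbdd : ∀ (t : ℤ), ∀ v ∈ Set.Icc (0:ℝ) 1, |a t v| ≤ α)
    (hreg : ∀ t : ℤ, CHolder ρ (a t))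
    -- the i.i.d. innovations, with mean 0 and variance σ² ∈ (0,∞)
    (ξ : ℕ → Ω → ℝ) (hξmeas : ∀ t, Measurable (ξ t))
    (hξindep : iIndepFun ξ ℙ)
    (hξid : ∀ t, IdentDistrib (ξ t) (ξ 0) ℙ ℙ)
    (hξmean : ∫ ω, ξ 0 ω ∂ℙ = 0)
    (σ : ℝ) (hσ : 0 < σ)
    (hξvar : ∫ ω, (ξ 0 ω) ^ 2 ∂ℙ = σ ^ 2)
    (hξsq : Integrable (fun ω => (ξ 0 ω) ^ 2) ℙ)
    -- the process, started from X₀ = 0 almost surely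
    (X : ℕ → ℕ → Ω → ℝ)
    (hXinit : ∀ n, ∀ᵐ ω ∂ℙ, X n 0 ω = 0)
    (hXrec : ∀ n t, 1 ≤ t → t ≤ n * T →
      ∀ ω, X n t ω = a (t : ℤ) ((t : ℝ) / ((n : ℝ) * T)) * X n (t - 1) ω + ξ t ω)
    -- fourth order moment assumptions on the innovations
    (hξ4int : Integrable (fun ω => (ξ 0 ω) ^ 4) ℙ)
    (hξ3 : ∫ ω, (ξ 0 ω) ^ 3 ∂ℙ = 0)
    -- the kernel, the bandwidths and the constants Aₙ
    (K : ℝ → ℝ) (hK : AssumpK K ∨ AssumpKt K) (hker : AssumpKer ρ K)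
    (b : ℕ → ℝ) (hbpos : ∀ n, 0 < b n)
    (hb0 : Tendsto b atTop (nhds 0))
    (hnb : Tendsto (fun n : ℕ => (n : ℝ) * b n) atTop atTop)
    (A : ℕ → ℝ)
    (hKA : (AssumpKt K ∧ ∀ n, A n = 1) ∨ (AssumpK K ∧ ∀ n : ℕ, A n = Real.log n))
    -- the point of estimation and the phase
    (u : ℝ) (hu : u ∈ Set.Ioo (0:ℝ) 1) (s : ℕ) (hs1 : 1 ≤ s) (hsT : s ≤ T)
    -- the bias term Jₙ
    (J : ℕ → Ω → ℝ)
    (hJ : ∀ n ω, J n ω = (1 / Real.sqrt ((n : ℝ) * b n)) * ∑ j ∈ Finset.range n,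
      K ((((s + j * T : ℕ) : ℝ) / ((n : ℝ) * T) - u) / b n) *
        (X n (s + j * T - 1) ω) ^ 2 *
        (a (s : ℤ) (((s + j * T : ℕ) : ℝ) / ((n : ℝ) * T)) - a (s : ℤ) u))
 :
    ∃ C : ℝ, 0 < C ∧ ∀ᶠ n : ℕ in atTop,
      (∫ ω, (J n ω) ^ 2 ∂ℙ) - (∫ ω, J n ω ∂ℙ) ^ 2
        ≤ C * (A n / ((n : ℝ) * b n) + b n ^ ρ) :=
  statement17_general hprob T hT ρ hρ1 hρ2 a α hα1 hbdd hreg ξ hξindep hξid hξmean X hXinit hXrec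
    hξ4int K hK b hbpos hb0 hnb A hKA u hu s hs1 hsT J hJ
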